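/- arXiv:0709.0720 — 2 statements merged into one kernel-verified Lean document; each statement's English description precedes it below -/
import Mathlib

section
/- Let T be a finite connected multigraph whose edges are each labeled either positive or negative, and let η assign to each spanning tree t the number of positive edges of t minus the number of negative edges of t. If e is a positive edge of T such that e lies in no cycle of T consisting entirely of positive edges, then every spanning tree t of T maximizing η contains e. -/
/-- A finite multigraph: vertex type `V`, edge type `E`, each edge has an
unordered pair of endpoints (loops and parallel edges are allowed). -/
structure Multigraph where
  V : Type
  E : Type
  fV : Fintype V
  fE : Fintype E
  dV : DecidableEq V
  dE : DecidableEq E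
  ends : E → Sym2 V

attribute [instance] Multigraph.fV Multigraph.fE Multigraph.dV Multigraph.dE

namespace Multigraph

variable (G : Multigraph)

/-- `u` and `v` are joined by an edge of the edge set `S`. -/
def adjOn (S : Finset G.E) (u v : G.V) : Prop :=
  ∃ e ∈ S, G.ends e = s(u, v)

/-- `u` and `v` are joined by a walk using only edges of `S`. -/
def reach (S : Finset G.E) (u v : G.V) : Prop :=
  Relation.ReflTransGen (G.adjOn S) u v

/-- The spanning subgraph with edge set `S` is connected. -/
def connectedOn (S : Finset G.E) : Prop := ∀ u v : G.V, G.reach S u v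

/-- The multigraph is connected. -/
def Connected : Prop := Nonempty G.V ∧ G.connectedOn Finset.univ

/-- The subgraph with edge set `S` contains no cycle: no edge of `S` has its
endpoints joined within `S` minus that edge. -/
def acyclicOn (S : Finset G.E) : Prop :=
  ∀ e ∈ S, ∀ u v : G.V, G.ends e = s(u, v) → ¬ G.reach (S.erase e) u v

/-- `S` is the edge set of a spanning tree: connected and acyclic spanning
subgraph. -/
def IsSpanningTree (S : Finset G.E) : Prop :=
  G.connectedOn S ∧ G.acyclicOn S

/-- the edge `e` lies in a cycle all of whose edges belong to `S`. -/
def InCycleOn (S : Finset G.E) (e : G.E) : Prop :=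
  e ∈ S ∧ ∃ u v : G.V, G.ends e = s(u, v) ∧ G.reach (S.erase e) u v

/-- the positive edges, for a sign labelling (`true` = positive). -/
def posEdges (sign : G.E → Bool) : Finset G.E :=
  Finset.univ.filter fun e => sign e = true

/-- the negative edges. -/
def negEdges (sign : G.E → Bool) : Finset G.E :=
  Finset.univ.filter fun e => sign e = false

/-- `e` lies in a cycle consisting entirely of positive edges. -/
def InPositiveCycle (sign : G.E → Bool) (e : G.E) : Prop :=
  G.InCycleOn (G.posEdges sign) e

/-- `e` lies in a cycle consisting entirely of negative edges. -/
def InNegativeCycle (sign : G.E → Bool) (e : G.E) : Prop :=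
  G.InCycleOn (G.negEdges sign) e

/-- `η(t)` = (# positive edges of `t`) − (# negative edges of `t`). -/
def eta (sign : G.E → Bool) (t : Finset G.E) : ℤ :=
  ((t.filter fun e => sign e = true).card : ℤ) -
    (t.filter fun e => sign e = false).card

/-- `S` contains a cycle. -/
def Dependent (S : Finset G.E) : Prop := ¬ G.acyclicOn S

/-- `C` is (the edge set of) a cycle: a minimal dependent set. -/
def IsCircuit (C : Finset G.E) : Prop :=
  G.Dependent C ∧ ∀ C' ⊂ C, G.acyclicOn C'

/-- the set of values of `η` on spanning trees. -/
def etaSet (sign : G.E → Bool) : Set ℤ :=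
  {x | ∃ t : Finset G.E, G.IsSpanningTree t ∧ G.eta sign t = x}

end Multigraph

/-!
If `e ∉ t`, the path of `t` between the ends `u`, `v` of `e` cannot consist of positive edges
only, since together with `e` it would form a positive cycle. So some negative edge `f` of `t`
separates `u` from `v` in `t`, and exchanging `f` for `e` gives a spanning tree whose `η` is
larger by `2`, contradicting maximality.
-/

namespace Multigraph

variable {G : Multigraph} {S T : Finset G.E} {e f : G.E} {a b u v x y : G.V}

lemma exists_ends_eq (f : G.E) : ∃ a b, G.ends f = s(a, b) :=
  Sym2.ind (f := fun z => ∃ a b, z = s(a, b)) (fun a b => ⟨a, b, rfl⟩) (G.ends f)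

lemma adjOn.symm (h : G.adjOn S u v) : G.adjOn S v u := by
  obtain ⟨f, hf, hends⟩ := h
  exact ⟨f, hf, by rw [hends, Sym2.eq_swap]⟩

lemma reach.symm (h : G.reach S u v) : G.reach S v u := by
  induction h with
  | refl => exact .refl
  | tail _ hcd ih => exact .head hcd.symm ih

lemma reach.trans (huv : G.reach S u v) (hvx : G.reach S v x) : G.reach S u x :=
  Relation.ReflTransGen.trans huv hvx

lemma reach_of_mem (hf : f ∈ S) (hends : G.ends f = s(u, v)) : G.reach S u v :=
  .single ⟨f, hf, hends⟩

lemma reach.mono (hST : S ⊆ T) (h : G.reach S u v) : G.reach T u v :=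
  Relation.ReflTransGen.mono (fun _ _ ⟨f, hf, hends⟩ => ⟨f, hST hf, hends⟩) _ _ h

lemma acyclicOn.mono (hST : S ⊆ T) (h : G.acyclicOn T) : G.acyclicOn S :=
  fun f hf u v hends hr => h f (hST hf) u v hends (hr.mono (Finset.erase_subset_erase f hST))

lemma reach.of_insert (hf : G.ends f = s(a, b)) (h : G.reach (insert f S) x y) :
    G.reach S x y ∨ (G.reach S x a ∧ G.reach S y b) ∨ (G.reach S x b ∧ G.reach S y a) := by
  induction h with
  | refl => exact Or.inl .refl
  | @tail c d _ hcd ih =>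
    obtain ⟨g, hg, hends⟩ := hcd
    rcases Finset.mem_insert.mp hg with rfl | hgS
    · rw [hf, Sym2.eq_iff] at hends
      rcases hends with ⟨rfl, rfl⟩ | ⟨rfl, rfl⟩ <;>
        rcases ih with h | ⟨h₁, h₂⟩ | ⟨h₁, h₂⟩
      · exact Or.inr (Or.inl ⟨h, .refl⟩)
      · exact Or.inl (h₁.trans h₂)
      · exact Or.inl h₁
      · exact Or.inr (Or.inr ⟨h, .refl⟩)
      · exact Or.inl h₁
      · exact Or.inl (h₁.trans h₂)
    · have hdc : G.reach S d c := reach_of_mem hgS (by rw [hends, Sym2.eq_swap])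
      rcases ih with h | ⟨h₁, h₂⟩ | ⟨h₁, h₂⟩
      · exact Or.inl (h.trans hdc.symm)
      · exact Or.inr (Or.inl ⟨h₁, hdc.trans h₂⟩)
      · exact Or.inr (Or.inr ⟨h₁, hdc.trans h₂⟩)

lemma acyclicOn_insert (hS : G.acyclicOn S) (he : G.ends e = s(u, v))
    (huv : ¬ G.reach S u v) : G.acyclicOn (insert e S) := by
  have heS : e ∉ S := fun h => huv (reach_of_mem h he)
  intro g hg c d hends hcd
  rcases Finset.mem_insert.mp hg with rfl | hgS
  · rw [Finset.erase_insert heS] at hcd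
    rw [he, Sym2.eq_iff] at hends
    rcases hends with ⟨rfl, rfl⟩ | ⟨rfl, rfl⟩
    · exact huv hcd
    · exact huv hcd.symm
  · have hge : g ≠ e := fun h => heS (h ▸ hgS)
    rw [Finset.erase_insert_of_ne hge.symm] at hcd
    have hcd' : G.reach S c d := reach_of_mem hgS hends
    rcases hcd.of_insert he with h | ⟨hcu, hdv⟩ | ⟨hcv, hdu⟩
    · exact hS g hgS c d hends h
    · exact huv (((hcu.mono (S.erase_subset g)).symm.trans hcd').trans
        (hdv.mono (S.erase_subset g)))
    · exact huv (((hdu.mono (S.erase_subset g)).symm.trans hcd'.symm).trans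
        (hcv.mono (S.erase_subset g)))

lemma reach_insert_swap (hf : G.ends f = s(a, b)) (he : G.ends e = s(u, v))
    (huv : ¬ G.reach S u v) (h : G.reach (insert f S) u v) : G.reach (insert e S) a b := by
  have hS : S ⊆ insert e S := Finset.subset_insert e S
  have hev : G.reach (insert e S) u v := reach_of_mem (Finset.mem_insert_self e S) he
  rcases h.of_insert hf with h | ⟨hua, hvb⟩ | ⟨hub, hva⟩
  · exact absurd h huv
  · exact ((hua.mono hS).symm.trans hev).trans (hvb.mono hS)
  · exact ((hva.mono hS).symm.trans hev.symm).trans (hub.mono hS)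

lemma connectedOn_insert_of_reach (hconn : G.connectedOn (insert f S))
    (hf : G.ends f = s(a, b)) (hab : G.reach (insert e S) a b) :
    G.connectedOn (insert e S) := by
  intro x y
  refine Relation.ReflTransGen.lift' id (fun c d ⟨g, hg, hends⟩ => ?_) _ _ (hconn x y)
  rcases Finset.mem_insert.mp hg with rfl | hgS
  · rw [hf, Sym2.eq_iff] at hends
    rcases hends with ⟨rfl, rfl⟩ | ⟨rfl, rfl⟩
    · exact hab
    · exact hab.symm
  · exact reach_of_mem (Finset.mem_insert_of_mem hgS) hends

lemma IsSpanningTree.insert_erase {t : Finset G.E} (ht : G.IsSpanningTree t) (hf : f ∈ t)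
    (he : G.ends e = s(u, v)) (huv : ¬ G.reach (t.erase f) u v) :
    G.IsSpanningTree (insert e (t.erase f)) := by
  obtain ⟨a, b, hab⟩ := G.exists_ends_eq f
  have hconn : G.connectedOn (insert f (t.erase f)) := by
    rw [Finset.insert_erase hf]; exact ht.1
  exact ⟨connectedOn_insert_of_reach hconn hab (reach_insert_swap hab he huv (hconn u v)),
    acyclicOn_insert (ht.2.mono (t.erase_subset f)) he huv⟩

/-- Otherwise the `S`-path from `u` to `v` avoiding `f` and the `T`-path through `f` would close
a cycle through `f`. -/
lemma not_reach_erase_of_subset (hS : G.acyclicOn S) (hTS : T ⊆ S) (hT : G.reach T u v)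
    (hf : f ∈ T) (hTf : ¬ G.reach (T.erase f) u v) : ¬ G.reach (S.erase f) u v := by
  intro hSf
  obtain ⟨a, b, hab⟩ := G.exists_ends_eq f
  have hsub : T.erase f ⊆ S.erase f := Finset.erase_subset_erase f hTS
  rw [← Finset.insert_erase hf] at hT
  rcases hT.of_insert hab with h | ⟨hua, hvb⟩ | ⟨hub, hva⟩
  · exact hTf h
  · exact hS f (hTS hf) a b hab (((hua.mono hsub).symm.trans hSf).trans (hvb.mono hsub))
  · exact hS f (hTS hf) a b hab (((hva.mono hsub).symm.trans hSf.symm).trans (hub.mono hsub))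

lemma exists_minimal_reach (h : G.reach S u v) :
    ∃ T ⊆ S, G.reach T u v ∧ ∀ f ∈ T, ¬ G.reach (T.erase f) u v := by
  classical
  obtain ⟨T, hT, hmin⟩ := (S.powerset.filter fun T => G.reach T u v).exists_min_image
    Finset.card ⟨S, Finset.mem_filter.mpr ⟨Finset.mem_powerset_self S, h⟩⟩
  obtain ⟨hTS, hTuv⟩ := Finset.mem_filter.mp hT
  refine ⟨T, Finset.mem_powerset.mp hTS, hTuv, fun f hf hTf => ?_⟩
  have := hmin (T.erase f) (Finset.mem_filter.mpr
    ⟨Finset.mem_powerset.mpr ((T.erase_subset f).trans (Finset.mem_powerset.mp hTS)), hTf⟩)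
  exact (Finset.card_erase_lt_of_mem hf).not_ge this

lemma exists_separating_edge_of_not_reach_filter (p : G.E → Prop) [DecidablePred p]
    (hS : G.acyclicOn S) (h : G.reach S u v) (hp : ¬ G.reach (S.filter p) u v) :
    ∃ f ∈ S, ¬ p f ∧ ¬ G.reach (S.erase f) u v := by
  obtain ⟨T, hTS, hT, hmin⟩ := exists_minimal_reach h
  obtain ⟨f, hfT, hpf⟩ : ∃ f ∈ T, ¬ p f := by
    by_contra! hall
    exact hp (hT.mono fun g hg => Finset.mem_filter.mpr ⟨hTS hg, hall g hg⟩)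
  exact ⟨f, hTS hfT, hpf, not_reach_erase_of_subset hS hTS hT hfT (hmin f hfT)⟩

lemma eta_insert_of_pos (sign : G.E → Bool) (he : sign e = true) (heS : e ∉ S) :
    G.eta sign (insert e S) = G.eta sign S + 1 := by
  unfold eta
  rw [Finset.filter_insert, if_pos he, Finset.filter_insert, if_neg (by simp [he]),
    Finset.card_insert_of_notMem (by simp [heS])]
  push_cast
  ring

lemma eta_erase_of_neg (sign : G.E → Bool) (hf : sign f = false) (hfS : f ∈ S) :
    G.eta sign (S.erase f) = G.eta sign S + 1 := by
  have hmem : f ∈ S.filter fun g => sign g = false := Finset.mem_filter.mpr ⟨hfS, hf⟩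
  unfold eta
  rw [Finset.filter_erase, Finset.filter_erase, Finset.erase_eq_of_notMem (by simp [hf]),
    Finset.card_erase_of_mem hmem, Nat.cast_pred (Finset.card_pos.mpr ⟨f, hmem⟩)]
  ring

end Multigraph

theorem stmt1_general (G : Multigraph) (sign : G.E → Bool)
    (e : G.E) (he : sign e = true) (hnc : ¬ G.InPositiveCycle sign e)
    (t : Finset G.E) (ht : G.IsSpanningTree t)
    (hmax : ∀ t' : Finset G.E, G.IsSpanningTree t' →
      G.eta sign t' ≤ G.eta sign t) :
    e ∈ t := by
  by_contra het
  obtain ⟨u, v, huv⟩ := G.exists_ends_eq e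
  have hsub : (t.filter fun g => sign g = true) ⊆ (G.posEdges sign).erase e := fun g hg => by
    obtain ⟨hgt, hg⟩ := Finset.mem_filter.mp hg
    exact Finset.mem_erase.mpr
      ⟨fun hge => het (hge ▸ hgt), Finset.mem_filter.mpr ⟨Finset.mem_univ g, hg⟩⟩
  have hpos : ¬ G.reach (t.filter fun g => sign g = true) u v := fun h =>
    hnc ⟨Finset.mem_filter.mpr ⟨Finset.mem_univ e, he⟩, u, v, huv, h.mono hsub⟩
  obtain ⟨f, hft, hf, hcut⟩ :=
    Multigraph.exists_separating_edge_of_not_reach_filter _ ht.2 (ht.1 u v) hpos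
  rw [Bool.not_eq_true] at hf
  have htree := ht.insert_erase hft huv hcut
  have heta : G.eta sign (insert e (t.erase f)) = G.eta sign t + 2 := by
    rw [Multigraph.eta_insert_of_pos sign he (fun h => het (Finset.mem_of_mem_erase h)),
      Multigraph.eta_erase_of_neg sign hf hft]
    ring
  linarith [hmax _ htree]

/-- In a finite connected signed multigraph, a positive edge lying
in no all-positive cycle belongs to every `η`-maximizing spanning tree. -/
theorem stmt1 (G : Multigraph) (hconn : G.Connected) (sign : G.E → Bool)
    (e : G.E) (he : sign e = true) (hnc : ¬ G.InPositiveCycle sign e)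
    (t : Finset G.E) (ht : G.IsSpanningTree t)
    (hmax : ∀ t' : Finset G.E, G.IsSpanningTree t' →
      G.eta sign t' ≤ G.eta sign t) :
    e ∈ t :=
  stmt1_general G sign e he hnc t ht hmax
end

section
/- Let T be a finite connected multigraph with edges labeled positive or negative, and η(t) the number of positive minus the number of negative edges of a spanning tree t. If a positive edge e of T lies in some cycle consisting entirely of positive edges, then there exists a spanning tree t maximizing η with e ∉ t. -/
/-!
Take an `η`-maximizing spanning tree `t`. If `e ∈ t`, removing `e` splits `t` into two
components, one containing each endpoint of `e`. The positive cycle through `e` returns from one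
endpoint of `e` to the other, so some edge `f ≠ e` of it joins the two components.
Then `t - e + f` is again a spanning tree, and since `f` and `e` are both positive it has the
same `η` as `t`.
-/

namespace Multigraph

variable (G : Multigraph)

lemma adjOn_symm {S : Finset G.E} {u v : G.V} (h : G.adjOn S u v) : G.adjOn S v u := by
  obtain ⟨e, he, h⟩ := h
  exact ⟨e, he, h.trans Sym2.eq_swap⟩

lemma reach_symm {S : Finset G.E} {u v : G.V} (h : G.reach S u v) : G.reach S v u := by
  induction h with
  | refl => exact .refl
  | tail _ hbc ih => exact .head (G.adjOn_symm hbc) ih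

lemma reach_mono {S S' : Finset G.E} (hS : S ⊆ S') {u v : G.V} (h : G.reach S u v) :
    G.reach S' u v := by
  induction h with
  | refl => exact .refl
  | tail _ hbc ih =>
    obtain ⟨f, hf, hfe⟩ := hbc
    exact ih.tail ⟨f, hS hf, hfe⟩

lemma reach_of_sym2_eq {S : Finset G.E} {x y a b : G.V} (h : s(a, b) = s(x, y))
    (hab : G.reach S a b) : G.reach S x y := by
  rcases Sym2.eq_iff.1 h with ⟨rfl, rfl⟩ | ⟨rfl, rfl⟩
  exacts [hab, G.reach_symm hab]

lemma reach_of_detour {S S' : Finset G.E} {e : G.E} {u v : G.V} (hS : S.erase e ⊆ S')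
    (hev : G.ends e = s(u, v)) (huv : G.reach S' u v) {a b : G.V} (h : G.reach S a b) :
    G.reach S' a b := by
  induction h with
  | refl => exact .refl
  | tail _ hbc ih =>
    obtain ⟨f, hf, hfe⟩ := hbc
    by_cases hfe' : f = e
    · subst hfe'
      exact ih.trans (G.reach_of_sym2_eq (hev.symm.trans hfe) huv)
    · exact ih.tail ⟨f, hS (Finset.mem_erase.2 ⟨hfe', hf⟩), hfe⟩

lemma connectedOn_of_detour {S S' : Finset G.E} {e : G.E} {u v : G.V} (hS : S.erase e ⊆ S')
    (hev : G.ends e = s(u, v)) (huv : G.reach S' u v) (hconn : G.connectedOn S) :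
    G.connectedOn S' :=
  fun a b => G.reach_of_detour hS hev huv (hconn a b)

lemma reach_erase_or {S : Finset G.E} {e : G.E} {u v : G.V} (hev : G.ends e = s(u, v))
    {w : G.V} (h : G.reach S w u) : G.reach (S.erase e) w u ∨ G.reach (S.erase e) w v := by
  induction h using Relation.ReflTransGen.head_induction_on with
  | refl => exact Or.inl .refl
  | head hac _ ih =>
    obtain ⟨f, hf, hfe⟩ := hac
    by_cases hfe' : f = e
    · subst hfe'
      rcases Sym2.eq_iff.1 (hfe.symm.trans hev) with ⟨rfl, rfl⟩ | ⟨rfl, rfl⟩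
      exacts [Or.inl .refl, Or.inr .refl]
    · have hadj : G.adjOn (S.erase e) _ _ := ⟨f, Finset.mem_erase.2 ⟨hfe', hf⟩, hfe⟩
      exact ih.imp (.head hadj) (.head hadj)

lemma reach_insert_cases {S : Finset G.E} {f : G.E} {x y : G.V}
    (hf : G.ends f = s(x, y)) {a b : G.V} (h : G.reach (insert f S) a b) :
    G.reach S a b ∨ (G.reach S a x ∧ G.reach S y b) ∨ (G.reach S a y ∧ G.reach S x b) := by
  induction h using Relation.ReflTransGen.head_induction_on with
  | refl => exact Or.inl .refl
  | head hac _ ih =>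
    obtain ⟨g, hg, hge⟩ := hac
    rcases Finset.mem_insert.1 hg with rfl | hgS
    · rcases Sym2.eq_iff.1 (hge.symm.trans hf) with ⟨rfl, rfl⟩ | ⟨rfl, rfl⟩
      · rcases ih with h | ⟨-, h⟩ | ⟨-, h⟩
        exacts [Or.inr (Or.inl ⟨.refl, h⟩), Or.inr (Or.inl ⟨.refl, h⟩), Or.inl h]
      · rcases ih with h | ⟨-, h⟩ | ⟨-, h⟩
        exacts [Or.inr (Or.inr ⟨.refl, h⟩), Or.inl h, Or.inr (Or.inr ⟨.refl, h⟩)]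
    · have hstep : G.reach S _ _ := .single ⟨g, hgS, hge⟩
      rcases ih with h | ⟨h1, h2⟩ | ⟨h1, h2⟩
      · exact Or.inl (hstep.trans h)
      · exact Or.inr (Or.inl ⟨hstep.trans h1, h2⟩)
      · exact Or.inr (Or.inr ⟨hstep.trans h1, h2⟩)

lemma exists_adjOn_of_reach {S : Finset G.E} {Q : G.V → Prop} {a b : G.V}
    (h : G.reach S a b) (ha : Q a) (hb : ¬ Q b) : ∃ x y, G.adjOn S x y ∧ Q x ∧ ¬ Q y := by
  induction h with
  | refl => exact absurd ha hb
  | @tail c d _ hcd ih =>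
    by_cases hc : Q c
    · exact ⟨c, d, hcd, hc, hb⟩
    · exact ih hc

lemma exists_isSpanningTree_subset {S : Finset G.E} (hS : G.connectedOn S) :
    ∃ t ⊆ S, G.IsSpanningTree t := by
  induction S using Finset.strongInduction with
  | _ S ih =>
    by_cases hA : G.acyclicOn S
    · exact ⟨S, subset_rfl, hS, hA⟩
    · simp only [acyclicOn, not_forall, not_not] at hA
      obtain ⟨e, he, u, v, hev, huv⟩ := hA
      obtain ⟨t, ht, hst⟩ := ih (S.erase e) (Finset.erase_ssubset he)
        (G.connectedOn_of_detour subset_rfl hev huv hS)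
      exact ⟨t, ht.trans (Finset.erase_subset _ _), hst⟩

section Exchange

variable {G} {t : Finset G.E} {e f : G.E} {u v x y : G.V}

lemma acyclicOn_exchange (ht : G.acyclicOn t) (he : e ∈ t) (hev : G.ends e = s(u, v))
    (hfxy : G.ends f = s(x, y)) (hux : G.reach (t.erase e) u x)
    (hyv : G.reach (t.erase e) y v) : G.acyclicOn (insert f (t.erase e)) := by
  have hcut : ¬ G.reach (t.erase e) u v := ht e he u v hev
  have hf : f ∉ t.erase e := fun hf => hcut (hux.trans ((Relation.ReflTransGen.single
    ⟨f, hf, hfxy⟩).trans hyv))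
  intro g hg a b hgab hab
  rcases Finset.mem_insert.1 hg with rfl | hg
  · rw [Finset.erase_insert hf] at hab
    exact hcut (hux.trans ((G.reach_of_sym2_eq (hgab.symm.trans hfxy) hab).trans hyv))
  have hgf : f ≠ g := by rintro rfl; exact hf hg
  rw [Finset.erase_insert_of_ne hgf] at hab
  have hsub : (t.erase e).erase g ⊆ t.erase e := Finset.erase_subset _ _
  have hg_ab : G.reach (t.erase e) a b := .single ⟨g, hg, hgab⟩
  rcases G.reach_insert_cases hfxy hab with h | ⟨hax, hyb⟩ | ⟨hay, hxb⟩
  · refine ht g (Finset.mem_of_mem_erase hg) a b hgab (G.reach_mono ?_ h)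
    rw [Finset.erase_right_comm]
    exact Finset.erase_subset _ _
  · replace hax := G.reach_symm (G.reach_mono hsub hax)
    replace hyb := G.reach_symm (G.reach_mono hsub hyb)
    exact hcut (hux.trans (hax.trans (hg_ab.trans (hyb.trans hyv))))
  · replace hay := G.reach_mono hsub hay
    replace hxb := G.reach_mono hsub hxb
    exact hcut (hux.trans (hxb.trans ((G.reach_symm hg_ab).trans (hay.trans hyv))))

lemma isSpanningTree_exchange (ht : G.IsSpanningTree t) (he : e ∈ t)
    (hev : G.ends e = s(u, v)) (hfxy : G.ends f = s(x, y)) (hux : G.reach (t.erase e) u x)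
    (hyv : G.reach (t.erase e) y v) : G.IsSpanningTree (insert f (t.erase e)) := by
  have hsub : t.erase e ⊆ insert f (t.erase e) := Finset.subset_insert _ _
  have huv : G.reach (insert f (t.erase e)) u v :=
    ((G.reach_mono hsub hux).tail ⟨f, Finset.mem_insert_self _ _, hfxy⟩).trans
      (G.reach_mono hsub hyv)
  exact ⟨G.connectedOn_of_detour hsub hev huv ht.1,
    acyclicOn_exchange ht.2 he hev hfxy hux hyv⟩

lemma exists_isSpanningTree_exchange {S : Finset G.E} (ht : G.IsSpanningTree t) (he : e ∈ t)
    (hc : G.InCycleOn S e) :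
    ∃ f ∈ S.erase e, f ∉ t ∧ G.IsSpanningTree (insert f (t.erase e)) := by
  obtain ⟨-, u, v, hev, huv⟩ := hc
  obtain ⟨x, y, ⟨f, hf, hfxy⟩, hux, huy⟩ :=
    G.exists_adjOn_of_reach (Q := G.reach (t.erase e) u) huv .refl (ht.2 e he u v hev)
  have hyv : G.reach (t.erase e) y v :=
    (G.reach_erase_or hev (ht.1 y u)).resolve_left fun h => huy (G.reach_symm h)
  refine ⟨f, hf, fun hft => huy (hux.tail ⟨f, ?_, hfxy⟩),
    isSpanningTree_exchange ht he hev hfxy hux hyv⟩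
  exact Finset.mem_erase.2 ⟨(Finset.mem_erase.1 hf).1, hft⟩

end Exchange

lemma eta_eq_sum (sign : G.E → Bool) (t : Finset G.E) :
    G.eta sign t = ∑ e ∈ t, if sign e = true then (1 : ℤ) else -1 := by
  have hneg (e : G.E) : (if sign e = false then (1 : ℤ) else 0) =
      1 - if sign e = true then 1 else 0 := by
    cases sign e <;> rfl
  simp only [eta, Finset.card_filter, Nat.cast_sum, Nat.cast_ite, Nat.cast_one, Nat.cast_zero,
    hneg, ← Finset.sum_sub_distrib]
  refine Finset.sum_congr rfl fun e _ => ?_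
  split_ifs <;> norm_num

lemma eta_exchange {sign : G.E → Bool} {t : Finset G.E} {e f : G.E} (he : e ∈ t) (hf : f ∉ t)
    (hsign : sign f = sign e) : G.eta sign (insert f (t.erase e)) = G.eta sign t := by
  rw [eta_eq_sum, eta_eq_sum, Finset.sum_insert fun h => hf (Finset.mem_of_mem_erase h),
    Finset.sum_erase_eq_sub he, hsign]
  ring

lemma exists_isSpanningTree_forall_eta_le (sign : G.E → Bool)
    (hconn : G.connectedOn Finset.univ) :
    ∃ t, G.IsSpanningTree t ∧
      ∀ t', G.IsSpanningTree t' → G.eta sign t' ≤ G.eta sign t := by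
  classical
  obtain ⟨t₀, -, ht₀⟩ := G.exists_isSpanningTree_subset hconn
  obtain ⟨t, ht, hmax⟩ := (Finset.univ.filter G.IsSpanningTree).exists_max_image (G.eta sign)
    ⟨t₀, by simpa using ht₀⟩
  exact ⟨t, by simpa using ht, fun t' ht' => hmax t' (by simpa using ht')⟩

end Multigraph

theorem stmt2_general (G : Multigraph) (hconn : G.Connected) (sign : G.E → Bool)
    (e : G.E) (hc : G.InPositiveCycle sign e) :
    ∃ t : Finset G.E, G.IsSpanningTree t ∧
      (∀ t' : Finset G.E, G.IsSpanningTree t' → G.eta sign t' ≤ G.eta sign t) ∧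
      e ∉ t := by
  obtain ⟨t, ht, hmax⟩ := G.exists_isSpanningTree_forall_eta_le sign hconn.2
  by_cases het : e ∈ t
  · obtain ⟨f, hf, hft, ht'⟩ := G.exists_isSpanningTree_exchange ht het hc
    have hsign : sign f = sign e := by
      simp only [Multigraph.InPositiveCycle, Multigraph.InCycleOn, Multigraph.posEdges,
        Finset.mem_erase, Finset.mem_filter] at hf hc
      rw [hf.2.2, hc.1.2]
    refine ⟨_, ht', fun s hs => G.eta_exchange het hft hsign ▸ hmax s hs, ?_⟩
    simp [(Finset.mem_erase.1 hf).1.symm]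
  · exact ⟨t, ht, hmax, het⟩

/-- If a positive edge lies in an all-positive cycle, then some
`η`-maximizing spanning tree avoids it. -/
theorem stmt2 (G : Multigraph) (hconn : G.Connected) (sign : G.E → Bool)
    (e : G.E) (he : sign e = true) (hc : G.InPositiveCycle sign e) :
    ∃ t : Finset G.E, G.IsSpanningTree t ∧
      (∀ t' : Finset G.E, G.IsSpanningTree t' → G.eta sign t' ≤ G.eta sign t) ∧
      e ∉ t :=
  stmt2_general G hconn sign e hc
end
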